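/- arXiv:2011.10820 — 2 statements merged into one kernel-verified Lean document; each statement's English description precedes it below -/
import Mathlib

section
/- Partial trace of a permutation fixing the last index: Let d ≥ 1, n ≥ 1, let R be a commutative ring, let σ' ∈ Equiv.Perm (Fin n) and let σ ∈ Equiv.Perm (Fin (n+1)) be its extension fixing the last element (σ (Fin.castSucc j) = Fin.castSucc (σ' j) and σ (Fin.last n) = Fin.last n). Then for every X : Fin (n+1) → Matrix (Fin d) (Fin d) R, ptr (P_σ * K X) = Matrix.trace (X (Fin.last n)) • (P_{σ'} * K (fun j : Fin n => X (Fin.castSucc j))). -/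
/-- The permutation operator `P_σ` on the `m`-th tensor power of the `d`-dimensional space,
realized as a matrix indexed by functions `Fin m → Fin d`. -/
def permMat (d m : ℕ) (R : Type*) [CommRing R] (σ : Equiv.Perm (Fin m)) :
    Matrix (Fin m → Fin d) (Fin m → Fin d) R :=
  Matrix.of fun f g => if g = f ∘ σ then 1 else 0

/-- The Kronecker product `K(x) = x 0 ⊗ x 1 ⊗ ⋯ ⊗ x (m-1)` of a family of `d × d` matrices. -/
def kron (d m : ℕ) (R : Type*) [CommRing R]
    (x : Fin m → Matrix (Fin d) (Fin d) R) :
    Matrix (Fin m → Fin d) (Fin m → Fin d) R :=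
  Matrix.of fun f g => ∏ i, x i (f i) (g i)

/-- The partial trace over the last tensor factor:
`ptr(M) f g = ∑_a M (Fin.snoc f a) (Fin.snoc g a)`. -/
def ptr (d n : ℕ) (R : Type*) [CommRing R]
    (M : Matrix (Fin (n + 1) → Fin d) (Fin (n + 1) → Fin d) R) :
    Matrix (Fin n → Fin d) (Fin n → Fin d) R :=
  Matrix.of fun f g => ∑ a : Fin d, M (Fin.snoc f a) (Fin.snoc g a)

theorem permMat_mul_apply {d m : ℕ} {R : Type*} [CommRing R] (σ : Equiv.Perm (Fin m))
    (M : Matrix (Fin m → Fin d) (Fin m → Fin d) R) (f g : Fin m → Fin d) :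
    (permMat d m R σ * M) f g = M (f ∘ σ) g := by
  simp [permMat, Matrix.mul_apply]

theorem kron_snoc_apply {d n : ℕ} {R : Type*} [CommRing R]
    (X : Fin (n + 1) → Matrix (Fin d) (Fin d) R) (f g : Fin n → Fin d) (a b : Fin d) :
    kron d (n + 1) R X (Fin.snoc f a) (Fin.snoc g b) =
      kron d n R (fun j => X (Fin.castSucc j)) f g * X (Fin.last n) a b := by
  simp [kron, Fin.prod_univ_castSucc]

theorem Fin.snoc_comp_perm_of_fixes_last {n : ℕ} {α : Type*} {σ' : Equiv.Perm (Fin n)}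
    {σ : Equiv.Perm (Fin (n + 1))} (hσ : ∀ j : Fin n, σ (Fin.castSucc j) = Fin.castSucc (σ' j))
    (hlast : σ (Fin.last n) = Fin.last n) (f : Fin n → α) (a : α) :
    (Fin.snoc f a : Fin (n + 1) → α) ∘ σ = Fin.snoc (f ∘ σ') a := by
  ext i
  induction i using Fin.lastCases with
  | last => simp [hlast]
  | cast j => simp [hσ j]

theorem ptr_perm_fixing_last_general (d n : ℕ)
    (R : Type*) [CommRing R] (σ' : Equiv.Perm (Fin n)) (σ : Equiv.Perm (Fin (n + 1)))
    (hσ : ∀ j : Fin n, σ (Fin.castSucc j) = Fin.castSucc (σ' j))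
    (hlast : σ (Fin.last n) = Fin.last n)
    (X : Fin (n + 1) → Matrix (Fin d) (Fin d) R) :
    ptr d n R (permMat d (n + 1) R σ * kron d (n + 1) R X) =
      Matrix.trace (X (Fin.last n)) •
        (permMat d n R σ' * kron d n R (fun j : Fin n => X (Fin.castSucc j))) := by
  ext f g
  simp only [ptr, Matrix.of_apply, Matrix.smul_apply, smul_eq_mul, permMat_mul_apply,
    Fin.snoc_comp_perm_of_fixes_last hσ hlast, kron_snoc_apply, Matrix.trace, Matrix.diag_apply,
    Finset.sum_mul]
  exact Finset.sum_congr rfl fun a _ => mul_comm _ _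

/-- **Partial trace of a permutation fixing the last index.**  If `σ ∈ S_{n+1}` is the extension
of `σ' ∈ S_n` fixing the last element, then
`ptr (P_σ * K X) = trace (X (last n)) • (P_{σ'} * K (X ∘ castSucc))`. -/
theorem ptr_perm_fixing_last (d n : ℕ) (hd : 1 ≤ d) (hn : 1 ≤ n)
    (R : Type*) [CommRing R] (σ' : Equiv.Perm (Fin n)) (σ : Equiv.Perm (Fin (n + 1)))
    (hσ : ∀ j : Fin n, σ (Fin.castSucc j) = Fin.castSucc (σ' j))
    (hlast : σ (Fin.last n) = Fin.last n)
    (X : Fin (n + 1) → Matrix (Fin d) (Fin d) R) :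
    ptr d n R (permMat d (n + 1) R σ * kron d (n + 1) R X) =
      Matrix.trace (X (Fin.last n)) •
        (permMat d n R σ' * kron d n R (fun j : Fin n => X (Fin.castSucc j))) :=
  ptr_perm_fixing_last_general d n R σ' σ hσ hlast X
end

section
/- Kernel of the symmetric group action at the critical size h = d + 1: Let d ≥ 1 and let π : MonoidAlgebra ℚ (Equiv.Perm (Fin (d+1))) → Matrix (Fin (d+1) → Fin d) (Fin (d+1) → Fin d) ℚ be the algebra homomorphism induced by σ ↦ P_σ. Then the kernel of π is the one-dimensional ℚ-subspace spanned by the full antisymmetrizer a := ∑_{σ ∈ Perm (Fin (d+1))} sgn(σ) • σ. -/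
/-!
The `(f, g)`-entry of `π x` is `∑ x_σ` over the `σ` with `f ∘ σ = g`.

Every `f : Fin (d + 1) → Fin d` identifies two points `i ≠ j`, and the `(f, g)`-entry of
`∑ sgn σ • P_σ` is the determinant of the matrix `[g l = f k]`, whose rows `i` and `j` coincide;
so the antisymmetrizer lies in the kernel.

Conversely, for `a ≠ b` pick `f` whose only non-trivial fibre is `{a, b}`. The `σ` with
`f ∘ σ = f ∘ σ₀` are then exactly `σ₀` and `(a b) σ₀`, so `π x = 0` forces
`x_{(a b) σ₀} = -x_{σ₀}`, whence `x_σ = sgn σ · x_1` and `x = x_1 • ∑ sgn σ • σ`.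
-/

open Equiv Equiv.Perm Finset MonoidAlgebra

namespace Equiv.Perm

variable {α : Type*} [DecidableEq α] {a b : α}

theorem eq_one_of_forall_apply_eq_or_swap (hab : a ≠ b) {ρ : Perm α}
    (h : ∀ k, ρ k = k ∨ ρ k = swap a b k) (ha : ρ a = a) : ρ = 1 := by
  have hb : ρ b = b := by
    refine (h b).resolve_right fun hb => hab.symm (ρ.injective ?_)
    rw [hb, swap_apply_right, ha]
  ext k
  by_cases hka : k = a
  · rw [hka, ha]; rfl
  by_cases hkb : k = b
  · rw [hkb, hb]; rfl
  simpa [swap_apply_of_ne_of_ne hka hkb] using h k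

theorem eq_one_or_swap_of_forall_apply_eq_or_swap (hab : a ≠ b) {ρ : Perm α}
    (h : ∀ k, ρ k = k ∨ ρ k = swap a b k) : ρ = 1 ∨ ρ = swap a b := by
  by_cases ha : ρ a = a
  · exact .inl (eq_one_of_forall_apply_eq_or_swap hab h ha)
  right
  have h' : ∀ k, (swap a b * ρ) k = k ∨ (swap a b * ρ) k = swap a b k := fun k => by
    rcases h k with hk | hk <;> simp [hk]
  have ha' : (swap a b * ρ) a = a := by
    simp [(h a).resolve_left ha]
  exact (eq_inv_of_mul_eq_one_right (eq_one_of_forall_apply_eq_or_swap hab h' ha')).trans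
    (swap_inv a b)

theorem eq_sign_mul_of_swap_mul_eq_neg [Fintype α] {R : Type*} [CommRing R] {c : Perm α → R}
    (hc : ∀ a b, a ≠ b → ∀ σ, c (swap a b * σ) = -c σ) (σ : Perm α) :
    c σ = sign σ * c 1 := by
  induction σ using swap_induction_on with
  | one => simp
  | swap_mul σ a b hab ih => rw [hc a b hab, ih, sign_mul, sign_swap hab]; push_cast; ring

end Equiv.Perm

section SwapFibres

variable {α β : Type*} [DecidableEq α] {a b : α}

theorem exists_apply_eq_apply_iff_eq_or_eq_swap [Fintype α] [Fintype β]
    (hcard : Fintype.card α = Fintype.card β + 1) (hab : a ≠ b) :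
    ∃ f : α → β, ∀ k l, f k = f l ↔ l = k ∨ l = swap a b k := by
  have : Fintype.card {x // x ≠ b} = Fintype.card β := by
    rw [Fintype.card_subtype_compl, Fintype.card_subtype_eq, hcard, Nat.add_sub_cancel]
  let e := Fintype.equivOfCardEq this
  refine ⟨fun x => e (if h : x = b then ⟨a, hab⟩ else ⟨x, h⟩), fun k l => ?_⟩
  rw [e.injective.eq_iff]
  grind

theorem comp_eq_comp_iff_eq_or_eq_swap_mul (hab : a ≠ b) {f : α → β}
    (hf : ∀ k l, f k = f l ↔ l = k ∨ l = swap a b k) (σ σ₀ : Perm α) :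
    f ∘ σ = f ∘ σ₀ ↔ σ = σ₀ ∨ σ = swap a b * σ₀ := by
  constructor
  · intro h
    have hρ : ∀ k, (σ * σ₀⁻¹) k = k ∨ (σ * σ₀⁻¹) k = swap a b k := fun k => by
      rw [← hf, Perm.mul_apply, ← Function.comp_apply (f := f), h]
      simp
    rcases eq_one_or_swap_of_forall_apply_eq_or_swap hab hρ with h1 | h1
    · exact .inl (mul_inv_eq_one.mp h1)
    · exact .inr (mul_inv_eq_iff_eq_mul.mp h1)
  · rintro (rfl | rfl)
    · rfl
    · funext k
      exact (hf _ _).2 (.inr (swap_apply_self a b (σ₀ k)).symm)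

end SwapFibres

section Antisymmetrizer

variable (R α : Type*) [CommRing R] [DecidableEq α] [Fintype α]

noncomputable def antisymmetrizer : MonoidAlgebra R (Perm α) :=
  ∑ σ : Perm α, ((sign σ : ℤ) : R) • of R (Perm α) σ

theorem coeff_antisymmetrizer (σ : Perm α) : (antisymmetrizer R α).coeff σ = sign σ := by
  simp [antisymmetrizer, coeff_sum, Finsupp.single_apply]

variable {R α}

theorem eq_coeff_one_smul_antisymmetrizer {x : MonoidAlgebra R (Perm α)}
    (hx : ∀ a b, a ≠ b → ∀ σ, x.coeff (swap a b * σ) = -x.coeff σ) :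
    x = x.coeff 1 • antisymmetrizer R α := by
  ext σ
  rw [coeff_smul_apply, coeff_antisymmetrizer, eq_sign_mul_of_swap_mul_eq_neg hx, smul_eq_mul,
    mul_comm]

end Antisymmetrizer

theorem sum_sign_smul_permMat_eq_zero {d m : ℕ} (R : Type*) [CommRing R] (h : d < m) :
    ∑ σ : Perm (Fin m), ((sign σ : ℤ) : R) • permMat d m R σ = 0 := by
  ext f g
  obtain ⟨i, j, hij, hf⟩ := Fintype.exists_ne_map_eq_of_card_lt f (by simpa using h)
  have hdet : (Matrix.of fun k l => if g l = f k then (1 : R) else 0).det = 0 :=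
    Matrix.det_zero_of_row_eq hij (by ext l; simp [hf])
  rw [Matrix.det_apply'] at hdet
  simpa [Matrix.sum_apply, permMat, funext_iff, Fintype.prod_boole] using hdet

section PermRepresentation

variable {d m : ℕ} {R : Type*} [CommRing R]
  {π : MonoidAlgebra R (Perm (Fin m)) →ₐ[R] Matrix (Fin m → Fin d) (Fin m → Fin d) R}

theorem eq_sum_coeff_smul_permMat (hπ : ∀ σ, π (of R _ σ) = permMat d m R σ)
    (x : MonoidAlgebra R (Perm (Fin m))) : π x = ∑ σ, x.coeff σ • permMat d m R σ := by
  induction x using MonoidAlgebra.induction_on with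
  | of σ => rw [hπ]; simp [Finsupp.single_apply]
  | add x y hx hy => simp [hx, hy, add_smul, sum_add_distrib]
  | smul r x hx => simp [hx, smul_sum, mul_smul]

theorem apply_eq_sum_coeff_filter (hπ : ∀ σ, π (of R _ σ) = permMat d m R σ)
    (x : MonoidAlgebra R (Perm (Fin m))) (f g : Fin m → Fin d) :
    π x f g = ∑ σ ∈ univ.filter fun σ : Perm (Fin m) => f ∘ σ = g, x.coeff σ := by
  simp [eq_sum_coeff_smul_permMat hπ, Matrix.sum_apply, permMat, sum_filter, eq_comm]

theorem map_antisymmetrizer_eq_zero (hπ : ∀ σ, π (of R _ σ) = permMat d m R σ) (h : d < m) :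
    π (antisymmetrizer R (Fin m)) = 0 := by
  simp [eq_sum_coeff_smul_permMat hπ, coeff_antisymmetrizer, sum_sign_smul_permMat_eq_zero R h]

end PermRepresentation

section CriticalSize

variable {d : ℕ} {R : Type*} [CommRing R]
  {π : MonoidAlgebra R (Perm (Fin (d + 1))) →ₐ[R]
    Matrix (Fin (d + 1) → Fin d) (Fin (d + 1) → Fin d) R}

theorem coeff_swap_mul_eq_neg_of_map_eq_zero
    (hπ : ∀ σ, π (of R _ σ) = permMat d (d + 1) R σ) {x : MonoidAlgebra R (Perm (Fin (d + 1)))}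
    (hx : π x = 0) {a b : Fin (d + 1)} (hab : a ≠ b) (σ₀ : Perm (Fin (d + 1))) :
    x.coeff (swap a b * σ₀) = -x.coeff σ₀ := by
  obtain ⟨f, hf⟩ := exists_apply_eq_apply_iff_eq_or_eq_swap (β := Fin d) (by simp) hab
  have hfibre : univ.filter (fun σ : Perm (Fin (d + 1)) => f ∘ σ = f ∘ σ₀) =
      {σ₀, swap a b * σ₀} := by
    ext σ
    simp [comp_eq_comp_iff_eq_or_eq_swap_mul hab hf]
  have hne : σ₀ ≠ swap a b * σ₀ := by simpa [eq_comm] using hab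
  have hentry : π x f (f ∘ σ₀) = 0 := by rw [hx]; rfl
  rw [apply_eq_sum_coeff_filter hπ, hfibre, sum_pair hne] at hentry
  linear_combination hentry

theorem map_eq_zero_iff_mem_span_antisymmetrizer
    (hπ : ∀ σ, π (of R _ σ) = permMat d (d + 1) R σ) (x : MonoidAlgebra R (Perm (Fin (d + 1)))) :
    π x = 0 ↔ x ∈ R ∙ antisymmetrizer R (Fin (d + 1)) := by
  rw [Submodule.mem_span_singleton]
  constructor
  · intro hx
    exact ⟨x.coeff 1, (eq_coeff_one_smul_antisymmetrizer fun a b hab σ =>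
      coeff_swap_mul_eq_neg_of_map_eq_zero hπ hx hab σ).symm⟩
  · rintro ⟨c, rfl⟩
    rw [map_smul, map_antisymmetrizer_eq_zero hπ (Nat.lt_succ_self d), smul_zero]

end CriticalSize

theorem kernel_at_critical_size_general (d : ℕ)
    (π : MonoidAlgebra ℚ (Equiv.Perm (Fin (d + 1))) →ₐ[ℚ]
      Matrix (Fin (d + 1) → Fin d) (Fin (d + 1) → Fin d) ℚ)
    (hπ : ∀ σ : Equiv.Perm (Fin (d + 1)),
      π (MonoidAlgebra.of ℚ (Equiv.Perm (Fin (d + 1))) σ) = permMat d (d + 1) ℚ σ) :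
    {x : MonoidAlgebra ℚ (Equiv.Perm (Fin (d + 1))) | π x = 0} =
      (Submodule.span ℚ
        {∑ σ : Equiv.Perm (Fin (d + 1)), ((Equiv.Perm.sign σ : ℤ) : ℚ) •
          MonoidAlgebra.of ℚ (Equiv.Perm (Fin (d + 1))) σ} :
        Submodule ℚ (MonoidAlgebra ℚ (Equiv.Perm (Fin (d + 1))))) :=
  Set.ext (map_eq_zero_iff_mem_span_antisymmetrizer hπ)

/-- **Kernel of the symmetric group action at the critical size `h = d + 1`.**  The kernel of the
algebra homomorphism `π : ℚ[S_{d+1}] → End((ℚ^d)^{⊗(d+1)})` induced by `σ ↦ P_σ` is the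
one-dimensional subspace spanned by the full antisymmetrizer `∑_σ sgn(σ) • σ`. -/
theorem kernel_at_critical_size (d : ℕ) (hd : 1 ≤ d)
    (π : MonoidAlgebra ℚ (Equiv.Perm (Fin (d + 1))) →ₐ[ℚ]
      Matrix (Fin (d + 1) → Fin d) (Fin (d + 1) → Fin d) ℚ)
    (hπ : ∀ σ : Equiv.Perm (Fin (d + 1)),
      π (MonoidAlgebra.of ℚ (Equiv.Perm (Fin (d + 1))) σ) = permMat d (d + 1) ℚ σ) :
    {x : MonoidAlgebra ℚ (Equiv.Perm (Fin (d + 1))) | π x = 0} =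
      (Submodule.span ℚ
        {∑ σ : Equiv.Perm (Fin (d + 1)), ((Equiv.Perm.sign σ : ℤ) : ℚ) •
          MonoidAlgebra.of ℚ (Equiv.Perm (Fin (d + 1))) σ} :
        Submodule ℚ (MonoidAlgebra ℚ (Equiv.Perm (Fin (d + 1))))) :=
  kernel_at_critical_size_general d π hπ
end
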